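/- The maximally entangled state projector |φ₊^d⟩⟨φ₊^d|, where |φ₊^d⟩ = (1/√d) Σ_{j=0}^{d−1} |j⟩⊗|j⟩, equals (1/d²) 𝟙⊗𝟙 + (1/d²) Σ_{(l,m)≠(0,0)} U_{lm} ⊗ U_{(−l) mod d, m}. -/

import Mathlib

/-!
The entry of `U_{lm} ⊗ U_{-l,m}` at `((a, b), (c, e))` is `ω^{(a - b) l}` if `c = a + m` and
`e = b + m`, and `0` otherwise (`ω = exp (2πi/d)`). Summing over `l`, orthogonality of the
characters of `ℤ/d` leaves `d` when `a = b` and `0` otherwise; summing over `m` then forces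
`c = e`. Hence `∑_{l,m} U_{lm} ⊗ U_{-l,m} = d² |φ₊⟩⟨φ₊|`, and the `(0, 0)` term is `𝟙 ⊗ 𝟙`.
-/

open Matrix Finset Kronecker

noncomputable def Weyl (d : ℕ) (n m : Fin d) : Matrix (Fin d) (Fin d) ℂ :=
  ∑ k : Fin d,
    Complex.exp (2 * Real.pi * Complex.I * (k : ℕ) * (n : ℕ) / d) •
      Matrix.single k (k + m) 1

/-- The projector onto the maximally entangled state
`|φ₊⟩ = (1/√d) Σ_j |j⟩⊗|j⟩`, i.e. `(1/d) Σ_{j,k} |j⟩⟨k| ⊗ |j⟩⟨k|`. -/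
noncomputable def bellProjector (d : ℕ) : Matrix (Fin d × Fin d) (Fin d × Fin d) ℂ :=
  ((1 : ℂ) / d) •
    ∑ j : Fin d, ∑ k : Fin d,
      (Matrix.single j k (1 : ℂ)) ⊗ₖ (Matrix.single j k (1 : ℂ))

theorem Fintype.sum_eq_add_sum_ite_eq_zero {ι M : Type*} [Fintype ι] [DecidableEq ι]
    [AddCommMonoid M] (f : ι → M) (a : ι) :
    ∑ i, f i = f a + ∑ i, if i = a then 0 else f i := by
  simp [Finset.sum_ite, Finset.filter_ne', Finset.add_sum_erase]

theorem ZMod.finEquiv_apply (d : ℕ) [NeZero d] (k : Fin d) :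
    ZMod.finEquiv d k = ((k : ℕ) : ZMod d) := by
  obtain ⟨n, rfl⟩ : ∃ n, d = n + 1 := Nat.exists_eq_succ_of_ne_zero (NeZero.ne d)
  exact (Fin.cast_val_eq_self k).symm

theorem exp_eq_stdAddChar_finEquiv (d : ℕ) [NeZero d] (k n : Fin d) :
    Complex.exp (2 * Real.pi * Complex.I * (k : ℕ) * (n : ℕ) / d) =
      ZMod.stdAddChar (ZMod.finEquiv d (k * n)) := by
  rw [map_mul, ZMod.finEquiv_apply, ZMod.finEquiv_apply, ← Nat.cast_mul,
    ← Int.cast_natCast (R := ZMod d), ZMod.stdAddChar_coe]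
  push_cast
  ring_nf

theorem sum_exp_mul_exp_neg (d : ℕ) [NeZero d] (a b : Fin d) :
    ∑ l : Fin d, Complex.exp (2 * Real.pi * Complex.I * (a : ℕ) * (l : ℕ) / d)
        * Complex.exp (2 * Real.pi * Complex.I * (b : ℕ) * ((-l : Fin d) : ℕ) / d)
      = if a = b then (d : ℂ) else 0 := by
  set e := ZMod.finEquiv d with he
  calc _ = ∑ l : Fin d, ZMod.stdAddChar (e l * (e a - e b)) := by
          refine Finset.sum_congr rfl fun l _ => ?_
          rw [exp_eq_stdAddChar_finEquiv, exp_eq_stdAddChar_finEquiv, ← he,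
            ← AddChar.map_add_eq_mul]
          simp only [map_mul, map_neg]
          ring_nf
    _ = ∑ x : ZMod d, ZMod.stdAddChar (x * (e a - e b)) :=
          e.toEquiv.sum_comp fun x => ZMod.stdAddChar (x * (e a - e b))
    _ = _ := by
          simp [AddChar.sum_mulShift _ (ZMod.isPrimitive_stdAddChar d), sub_eq_zero,
            e.injective.eq_iff]

theorem weyl_apply (d : ℕ) (n m a b : Fin d) :
    Weyl d n m a b =
      if a + m = b then Complex.exp (2 * Real.pi * Complex.I * (a : ℕ) * (n : ℕ) / d) else 0 := by
  simp [Weyl, Matrix.sum_apply, Matrix.single_apply, ite_and]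

theorem weyl_zero_zero (d : ℕ) [NeZero d] : Weyl d 0 0 = 1 := by
  ext a b
  simp [weyl_apply, Matrix.one_apply]

theorem bellProjector_apply (d : ℕ) (a b c e : Fin d) :
    bellProjector d (a, b) (c, e) = if a = b ∧ c = e then 1 / (d : ℂ) else 0 := by
  simp [bellProjector, Matrix.sum_apply, Matrix.single_apply, ite_and, eq_comm]

theorem sum_weyl_kronecker_weyl_neg_apply (d : ℕ) [NeZero d] (a b c e : Fin d) :
    (∑ l : Fin d, ∑ m : Fin d, Weyl d l m ⊗ₖ Weyl d (-l) m) (a, b) (c, e) =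
      if a = b ∧ c = e then (d : ℂ) else 0 := by
  simp only [Matrix.sum_apply, Matrix.kroneckerMap_apply, weyl_apply, ite_zero_mul_ite_zero]
  rw [Finset.sum_comm]
  simp only [Finset.sum_ite_irrel, Finset.sum_const_zero, sum_exp_mul_exp_neg]
  rcases eq_or_ne a b with rfl | hab
  · simp [← eq_sub_iff_add_eq', ite_and]
  · simp [hab]

theorem bellProjector_eq_smul_sum_weyl_kronecker_weyl_neg (d : ℕ) [NeZero d] :
    bellProjector d =
      ((1 : ℂ) / (d ^ 2)) • ∑ l : Fin d, ∑ m : Fin d, Weyl d l m ⊗ₖ Weyl d (-l) m := by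
  ext ⟨a, b⟩ ⟨c, e⟩
  rw [Matrix.smul_apply, bellProjector_apply, sum_weyl_kronecker_weyl_neg_apply]
  have hd : (d : ℂ) ≠ 0 := Nat.cast_ne_zero.mpr (NeZero.ne d)
  split_ifs
  · rw [smul_eq_mul]
    field_simp
  · simp

theorem bell_projector_weyl_expansion (d : ℕ) [NeZero d] :
    bellProjector d =
      ((1 : ℂ) / (d ^ 2)) • ((1 : Matrix (Fin d) (Fin d) ℂ) ⊗ₖ 1)
      + ((1 : ℂ) / (d ^ 2)) •
          ∑ l : Fin d, ∑ m : Fin d,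
            (if (l, m) = ((0 : Fin d), (0 : Fin d)) then 0
             else (Weyl d l m) ⊗ₖ (Weyl d (-l) m)) := by
  rw [bellProjector_eq_smul_sum_weyl_kronecker_weyl_neg, ← smul_add, ← Fintype.sum_prod_type',
    ← Fintype.sum_prod_type', Fintype.sum_eq_add_sum_ite_eq_zero _ ((0 : Fin d), (0 : Fin d))]
  simp [weyl_zero_zero]
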